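/- Every reduced spherical convex body on S^d of thickness greater than π/2 is smooth, i.e., at every boundary point there is exactly one supporting hemisphere. -/

import Mathlib

open Set Metric
open scoped RealInnerProductSpace

noncomputable section

/-- Euclidean space `E^{d+1}`. -/
abbrev E (d : ℕ) := EuclideanSpace ℝ (Fin (d + 1))

/-- The unit sphere `S^d ⊆ E^{d+1}`. -/
def Sph (d : ℕ) : Set (E d) := Metric.sphere (0 : E d) 1

variable {d : ℕ}

/-- Geodesic (angular) distance on the unit sphere. -/
def sdist (x y : E d) : ℝ := Real.arccos ⟪x, y⟫

/-- Closed hemisphere with center `p`. -/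
def Hemi (p : E d) : Set (E d) := {x ∈ Sph d | 0 ≤ ⟪p, x⟫}

/-- Open hemisphere with center `p`. -/
def openHemi (p : E d) : Set (E d) := {x ∈ Sph d | 0 < ⟪p, x⟫}

/-- Boundary great subsphere of the hemisphere with center `p`. -/
def bdHemi (p : E d) : Set (E d) := {x ∈ Sph d | ⟪p, x⟫ = 0}

/-- Spherical convexity: no antipodal pairs, and the nonnegative cone over the
set is convex (equivalent to being closed under shorter arcs). -/
def SphConvex (C : Set (E d)) : Prop :=
  (∀ x ∈ C, -x ∉ C) ∧ Convex ℝ {v : E d | ∃ r : ℝ, 0 ≤ r ∧ ∃ x ∈ C, v = r • x}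

/-- Spherical convex hull: the smallest spherically convex subset of the
sphere containing `A`. -/
def sConvHull (A : Set (E d)) : Set (E d) := ⋂₀ {C | SphConvex C ∧ C ⊆ Sph d ∧ A ⊆ C}

/-- Interior of `C` relative to the sphere. -/
def sInterior (C : Set (E d)) : Set (E d) :=
  {x ∈ Sph d | ∃ ε > 0, Metric.ball x ε ∩ Sph d ⊆ C}

/-- A spherical convex body: closed, spherically convex, with nonempty
interior relative to the sphere. -/
def IsBody (C : Set (E d)) : Prop :=
  C ⊆ Sph d ∧ IsClosed C ∧ SphConvex C ∧ (sInterior C).Nonempty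

/-- Spherical ball of radius `r` centered at `p`. -/
def sBall (p : E d) (r : ℝ) : Set (E d) := {x ∈ Sph d | sdist p x ≤ r}

/-- Normalization of a vector. -/
def nrm (v : E d) : E d := ‖v‖⁻¹ • v

/-- The center of the `(d-1)`-dimensional hemisphere `bd(G) ∩ H`, where `G`, `H`
are the hemispheres centered at `g`, `h`. -/
def cGH (g h : E d) : E d := nrm (h - ⟪g, h⟫ • g)

/-- Thickness of the lune `Hemi g ∩ Hemi h`: the geodesic distance between the
centers of its two bounding `(d-1)`-dimensional hemispheres. -/
def lthick (g h : E d) : ℝ := Real.pi - sdist g h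

/-- The hemisphere centered at `k` supports `C`. -/
def Supports (k : E d) (C : Set (E d)) : Prop :=
  C ⊆ Hemi k ∧ (bdHemi k ∩ C).Nonempty

/-- Width of `C` determined by a supporting hemisphere centered at `k`:
minimal thickness of a lune `K ∩ K*` over supporting hemispheres `K* ≠ K`. -/
def width (C : Set (E d)) (k : E d) : ℝ :=
  sInf {w | ∃ k' ∈ Sph d, k' ≠ k ∧ k' ≠ -k ∧ Supports k' C ∧ w = lthick k k'}

/-- Thickness of `C`: minimal thickness of a lune containing `C`. -/
def thick (C : Set (E d)) : ℝ :=
  sInf {w | ∃ g ∈ Sph d, ∃ h ∈ Sph d, g ≠ h ∧ g ≠ -h ∧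
    C ⊆ Hemi g ∩ Hemi h ∧ w = lthick g h}

/-- Spherical diameter of a set. -/
def sdiam (C : Set (E d)) : ℝ := sSup {r | ∃ x ∈ C, ∃ y ∈ C, r = sdist x y}

/-- Reduced spherical convex body. -/
def Reduced (R : Set (E d)) : Prop :=
  IsBody R ∧ ∀ Z : Set (E d), IsBody Z → Z ⊆ R → Z ≠ R → thick Z < thick R

/-- Extreme point of a spherical convex body. -/
def ExtremePt (C : Set (E d)) (e : E d) : Prop := e ∈ C ∧ SphConvex (C \ {e})

/-!
Write `δ = π - Δ(R)`; the hypothesis says `δ < π / 2`. Every lune containing `R` is at least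
`Δ(R)` thick, so the centres of any two hemispheres containing `R` make an angle at most `δ`.
Suppose two such hemispheres, with centres `k₁ ≠ k₂`, both support `R` at `p`, and put
`m = k₁ + k₂`. Since `δ < π / 2`, every centre is strictly within `δ` of `m`, and by compactness
within some `θ < δ`. Now cut `R` with the cone `P` dual to a thin circular cone of half-angle `η`
around `m`: `Z = R ∩ P` is a convex body which misses `p` (as `⟪m, p⟫ = 0`). By the duality
between intersections and sums of closed convex cones, the centre of any hemisphere containing
`Z` lies in the closure of (centres for `R`) + (the thin cone), and by the triangle inequality for
angles any two such vectors make an angle at most `δ`. Hence `Δ(Z) ≥ Δ(R)`, contradicting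
reducedness. Existence of a supporting hemisphere is Hahn–Banach applied to the cone over `R`.
-/

open InnerProductGeometry ProperCone Real Topology Filter NormedSpace
open scoped Pointwise

section InnerProductSpace

variable {V : Type*} [NormedAddCommGroup V] [InnerProductSpace ℝ V]

lemma cos_mul_norm_mul_norm_le_inner {x y : V} {δ : ℝ} (hδ : δ ≤ π) (h : angle x y ≤ δ) :
    cos δ * (‖x‖ * ‖y‖) ≤ ⟪x, y⟫ := by
  rw [← cos_angle_mul_norm_mul_norm]
  gcongr
  exact cos_le_cos_of_nonneg_of_le_pi (angle_nonneg x y) hδ h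

lemma angle_le_of_cos_mul_norm_mul_norm_le_inner {x y : V} {δ : ℝ} (hx : x ≠ 0) (hy : y ≠ 0)
    (hδ : 0 ≤ δ) (h : cos δ * (‖x‖ * ‖y‖) ≤ ⟪x, y⟫) : angle x y ≤ δ := by
  by_contra! hlt
  have hcos : cos (angle x y) < cos δ := cos_lt_cos_of_nonneg_of_le_pi hδ (angle_le_pi x y) hlt
  rw [← cos_angle_mul_norm_mul_norm] at h
  have : 0 < ‖x‖ * ‖y‖ := by positivity
  nlinarith

lemma inner_pos_of_mem_interior [CompleteSpace V] {S : Set V} {a x : V} (ha : a ∈ innerDual S)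
    (ha0 : a ≠ 0) (hx : x ∈ interior S) : 0 < ⟪x, a⟫ := by
  obtain ⟨ε, hε, hball⟩ := Metric.mem_nhds_iff.1 (mem_interior_iff_mem_nhds.1 hx)
  have hna : 0 < ‖a‖ := norm_pos_iff.2 ha0
  set t := ε / (2 * ‖a‖)
  have ht : 0 < t := by positivity
  have hmem : x - t • a ∈ S := hball <| by
    rw [mem_ball, dist_eq_norm, sub_sub_cancel_left, norm_neg, norm_smul, Real.norm_of_nonneg ht.le]
    calc t * ‖a‖ = ε / 2 := by simp only [t]; field_simp
      _ < ε := by linarith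
  have : 0 ≤ ⟪x - t • a, a⟫ := ha hmem
  rw [inner_sub_left, real_inner_smul_left, real_inner_self_eq_norm_sq] at this
  have : 0 < t * ‖a‖ ^ 2 := by positivity
  linarith

lemma angle_add_lt {a k₁ k₂ : V} {δ : ℝ} (ha : a ≠ 0) (hk₁ : ‖k₁‖ = 1) (hk₂ : ‖k₂‖ = 1)
    (hne : k₁ ≠ k₂) (hδ : δ < π / 2) (h₁ : angle a k₁ ≤ δ) (h₂ : angle a k₂ ≤ δ) :
    angle a (k₁ + k₂) < δ := by
  have hsum : ‖k₁ + k₂‖ < 2 := by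
    have hpar : ‖k₁ + k₂‖ ^ 2 + ‖k₁ - k₂‖ ^ 2 = 4 := by
      rw [norm_add_sq_real, norm_sub_sq_real, hk₁, hk₂]; ring
    have : 0 < ‖k₁ - k₂‖ := norm_pos_iff.2 (sub_ne_zero.2 hne)
    nlinarith [norm_nonneg (k₁ + k₂)]
  by_contra! hle
  have hcos : 0 < cos δ := cos_pos_of_mem_Ioo ⟨by linarith [angle_nonneg a k₁, pi_pos], hδ⟩
  have e₁ : cos δ * ‖a‖ ≤ ⟪a, k₁⟫ := by
    simpa [hk₁] using cos_mul_norm_mul_norm_le_inner (by linarith [pi_pos]) h₁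
  have e₂ : cos δ * ‖a‖ ≤ ⟪a, k₂⟫ := by
    simpa [hk₂] using cos_mul_norm_mul_norm_le_inner (by linarith [pi_pos]) h₂
  have hc : cos (angle a (k₁ + k₂)) ≤ cos δ :=
    cos_le_cos_of_nonneg_of_le_pi (by linarith [angle_nonneg a k₁]) (angle_le_pi _ _) hle
  have hna : 0 < cos δ * ‖a‖ := mul_pos hcos (norm_pos_iff.2 ha)
  have : cos δ * ‖a‖ * 2 ≤ cos δ * ‖a‖ * ‖k₁ + k₂‖ :=
    calc cos δ * ‖a‖ * 2 ≤ ⟪a, k₁⟫ + ⟪a, k₂⟫ := by linarith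
      _ = cos (angle a (k₁ + k₂)) * (‖a‖ * ‖k₁ + k₂‖) := by
          rw [cos_angle_mul_norm_mul_norm, inner_add_right]
      _ ≤ cos δ * (‖a‖ * ‖k₁ + k₂‖) := by gcongr
      _ = cos δ * ‖a‖ * ‖k₁ + k₂‖ := by ring
  linarith [mul_lt_mul_of_pos_left hsum hna]

def PairwiseInnerGE (c : ℝ) (S : Set V) : Prop :=
  ∀ x ∈ S, ∀ y ∈ S, c * (‖x‖ * ‖y‖) ≤ ⟪x, y⟫

lemma pairwiseInnerGE_cos_of_angle_le {S : Set V} {δ : ℝ} (hδ : δ ≤ π)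
    (h : ∀ x ∈ S, ∀ y ∈ S, x ≠ 0 → y ≠ 0 → angle x y ≤ δ) : PairwiseInnerGE (cos δ) S := by
  intro x hx y hy
  rcases eq_or_ne x 0 with rfl | hx0
  · simp
  rcases eq_or_ne y 0 with rfl | hy0
  · simp
  exact cos_mul_norm_mul_norm_le_inner hδ (h x hx y hy hx0 hy0)

lemma PairwiseInnerGE.closure {c : ℝ} {S : Set V} (h : PairwiseInnerGE c S) :
    PairwiseInnerGE c (closure S) := by
  intro x hx y hy
  have hcl : IsClosed {q : V × V | c * (‖q.1‖ * ‖q.2‖) ≤ ⟪q.1, q.2⟫} :=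
    isClosed_le (by fun_prop) (by fun_prop)
  have hsub := closure_minimal (fun q (hq : q ∈ S ×ˢ S) => h _ hq.1 _ hq.2) hcl
  exact hsub (show (x, y) ∈ _root_.closure (S ×ˢ S) by rw [closure_prod_eq]; exact ⟨hx, hy⟩)

lemma PairwiseInnerGE.add {c : ℝ} {S T : Set V} (hc : 0 ≤ c) (h : PairwiseInnerGE c (S ∪ T)) :
    PairwiseInnerGE c (S + T) := by
  rintro _ ⟨a, ha, b, hb, rfl⟩ _ ⟨a', ha', b', hb', rfl⟩
  calc c * (‖a + b‖ * ‖a' + b'‖) ≤ c * ((‖a‖ + ‖b‖) * (‖a'‖ + ‖b'‖)) := by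
        gcongr <;> exact norm_add_le _ _
    _ = c * (‖a‖ * ‖a'‖) + c * (‖a‖ * ‖b'‖) + c * (‖b‖ * ‖a'‖) + c * (‖b‖ * ‖b'‖) := by ring
    _ ≤ ⟪a, a'⟫ + ⟪a, b'⟫ + ⟪b, a'⟫ + ⟪b, b'⟫ := by
        gcongr <;> apply h <;> simp [*]
    _ = ⟪a + b, a' + b'⟫ := by simp only [inner_add_left, inner_add_right]; ring

lemma ProperCone.exists_coe_eq {S : Set V} (h0 : (0 : V) ∈ S) (hadd : ∀ x ∈ S, ∀ y ∈ S, x + y ∈ S)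
    (hsmul : ∀ x ∈ S, ∀ r : ℝ, 0 ≤ r → r • x ∈ S) (hS : IsClosed S) :
    ∃ K : ProperCone ℝ V, (K : Set V) = S :=
  ⟨⟨⟨⟨⟨S, fun ha hb => hadd _ ha _ hb⟩, h0⟩, fun c _ hx => hsmul _ hx c c.2⟩, hS⟩, rfl⟩

lemma ProperCone.innerDual_inter_subset_closure_add [CompleteSpace V] (K L : ProperCone ℝ V) :
    (innerDual ((K : Set V) ∩ L) : Set V) ⊆
      closure ((innerDual (K : Set V) : Set V) + innerDual (L : Set V)) := by
  intro u hu
  by_contra hcl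
  obtain ⟨y, hy, hyu⟩ := hyperplane_separation' (innerDual (K : Set V) ⊔ innerDual (L : Set V))
    (x₀ := u) (by rw [ClosedSubmodule.mem_sup]; convert hcl; exact Submodule.coe_sup _ _)
  have hyK : y ∈ K := by
    rw [← innerDual_innerDual K]
    exact fun x hx => hy x (le_sup_left (a := innerDual (K : Set V)) hx)
  have hyL : y ∈ L := by
    rw [← innerDual_innerDual L]
    exact fun x hx => hy x (le_sup_right (b := innerDual (L : Set V)) hx)
  have : 0 ≤ ⟪y, u⟫ := hu ⟨hyK, hyL⟩
  rw [real_inner_comm] at this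
  linarith

lemma ProperCone.normalize_mem (K : ProperCone ℝ V) {a : V} (ha : a ∈ K) :
    NormedSpace.normalize a ∈ K :=
  K.smul_mem ha (inv_nonneg.2 (norm_nonneg a))

lemma ProperCone.exists_forall_angle_le_of_forall_angle_lt [ProperSpace V] (K : ProperCone ℝ V)
    {m : V} {δ : ℝ} (hm : m ≠ 0) (h : ∀ a ∈ K, a ≠ 0 → angle a m < δ) :
    ∃ θ < δ, ∀ a ∈ K, a ≠ 0 → angle a m ≤ θ := by
  set A := (K : Set V) ∩ sphere 0 1
  have hnormalize : ∀ a ∈ K, a ≠ 0 → NormedSpace.normalize a ∈ A := fun a ha ha0 =>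
    ⟨K.normalize_mem ha, by simpa [norm_normalize_eq_one_iff] using ha0⟩
  rcases A.eq_empty_or_nonempty with hA | hA
  · exact ⟨δ - 1, by linarith, fun a ha ha0 => by simpa [hA] using hnormalize a ha ha0⟩
  have hA0 : ∀ a ∈ A, a ≠ 0 := fun a ha h0 => by simp [A, h0] at ha
  have hcont : ContinuousOn (angle · m) A := fun a ha =>
    ((continuousAt_angle (x := (a, m)) (hA0 a ha) hm).comp (f := fun b : V => (b, m))
      (by fun_prop)).continuousWithinAt
  obtain ⟨a₀, ha₀, hmax⟩ :=
    ((isCompact_sphere 0 1).inter_left K.isClosed).exists_isMaxOn hA hcont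
  refine ⟨angle a₀ m, h a₀ ha₀.1 (hA0 a₀ ha₀), fun a ha ha0 => ?_⟩
  rw [← angle_normalize_left]
  exact hmax (hnormalize a ha ha0)

def capCone (m : V) (η : ℝ) : Set V := {w | cos η * (‖m‖ * ‖w‖) ≤ ⟪m, w⟫}

lemma exists_properCone_coe_eq_capCone (m : V) {η : ℝ} (hη : 0 ≤ cos η) :
    ∃ D : ProperCone ℝ V, (D : Set V) = capCone m η := by
  refine ProperCone.exists_coe_eq (by simp [capCone]) (fun w hw w' hw' => ?_)
    (fun w hw r hr => ?_) (isClosed_le (by fun_prop) (by fun_prop))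
  · calc cos η * (‖m‖ * ‖w + w'‖) ≤ cos η * (‖m‖ * (‖w‖ + ‖w'‖)) := by
          gcongr; exact norm_add_le w w'
      _ = cos η * (‖m‖ * ‖w‖) + cos η * (‖m‖ * ‖w'‖) := by ring
      _ ≤ ⟪m, w + w'⟫ := by rw [inner_add_right]; exact add_le_add hw hw'
  · calc cos η * (‖m‖ * ‖r • w‖) = r * (cos η * (‖m‖ * ‖w‖)) := by
          rw [norm_smul, Real.norm_of_nonneg hr]; ring
      _ ≤ ⟪m, r • w⟫ := by rw [real_inner_smul_right]; exact mul_le_mul_of_nonneg_left hw hr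

lemma angle_le_of_mem_capCone {m w : V} {η : ℝ} (hm : m ≠ 0) (hη : 0 ≤ η)
    (hw : w ∈ capCone m η) (hw0 : w ≠ 0) : angle m w ≤ η :=
  angle_le_of_cos_mul_norm_mul_norm_le_inner hm hw0 hη hw

lemma mem_innerDual_capCone [CompleteSpace V] {m v : V} {η : ℝ} (hm : m ≠ 0) (hη : 0 ≤ η)
    (hv : angle m v ≤ π / 2 - η) : v ∈ innerDual (capCone m η) := by
  intro w hw
  rcases eq_or_ne w 0 with rfl | hw0
  · simp
  have hangle : angle w v ≤ π / 2 :=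
    calc angle w v ≤ angle w m + angle m v := angle_le_angle_add_angle w m v
      _ ≤ η + (π / 2 - η) := by
          gcongr; rw [angle_comm]; exact angle_le_of_mem_capCone hm hη hw hw0
      _ = π / 2 := by ring
  simpa using cos_mul_norm_mul_norm_le_inner (by linarith [pi_pos]) hangle

lemma notMem_innerDual_capCone [CompleteSpace V] {m p : V} {η : ℝ} (hm : m ≠ 0) (hp : ‖p‖ = 1)
    (hmp : ⟪m, p⟫ = 0) (hη : 0 < sin η) : p ∉ innerDual (capCone m η) := by
  intro h
  set w := cos η • m - (sin η * ‖m‖) • p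
  have hpyth := sin_sq_add_cos_sq η
  have hw : ‖w‖ = ‖m‖ := by
    rw [← sq_eq_sq₀ (norm_nonneg _) (norm_nonneg _), norm_sub_sq_real, norm_smul, norm_smul,
      real_inner_smul_left, real_inner_smul_right, hmp, hp, Real.norm_eq_abs, Real.norm_eq_abs,
      abs_mul, abs_norm]
    nlinarith [sq_abs (cos η), sq_abs (sin η)]
  have hwm : w ∈ capCone m η := by
    show cos η * (‖m‖ * ‖w‖) ≤ ⟪m, w⟫
    rw [hw, inner_sub_right, real_inner_smul_right, real_inner_smul_right, hmp,
      real_inner_self_eq_norm_sq]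
    nlinarith
  have : 0 ≤ ⟪w, p⟫ := h hwm
  rw [inner_sub_left, real_inner_smul_left, real_inner_smul_left, hmp,
    real_inner_self_eq_norm_sq, hp] at this
  have : 0 < sin η * ‖m‖ := mul_pos hη (norm_pos_iff.2 hm)
  linarith

lemma pairwiseInnerGE_closure_add_capCone {S : Set V} {m : V} {δ η : ℝ} (hm : m ≠ 0)
    (hη : 0 ≤ η) (hδ : δ ≤ π / 2) (h2η : 2 * η ≤ δ)
    (hSS : ∀ a ∈ S, ∀ a' ∈ S, a ≠ 0 → a' ≠ 0 → angle a a' ≤ δ)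
    (hSm : ∀ a ∈ S, a ≠ 0 → angle a m ≤ δ - η) :
    PairwiseInnerGE (cos δ) (closure (S + capCone m η)) := by
  refine (PairwiseInnerGE.add (cos_nonneg_of_mem_Icc ⟨by linarith [pi_pos], hδ⟩)
    (pairwiseInnerGE_cos_of_angle_le (by linarith [pi_pos]) ?_)).closure
  have hcap : ∀ b ∈ capCone m η, b ≠ 0 → angle b m ≤ η := fun b hb hb0 =>
    angle_comm m b ▸ angle_le_of_mem_capCone hm hη hb hb0
  rintro x (hx | hx) y (hy | hy) hx0 hy0
  · exact hSS x hx y hy hx0 hy0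
  all_goals
    refine (angle_le_angle_add_angle x m y).trans ?_
    rw [angle_comm m y]
  · linarith [hSm x hx hx0, hcap y hy hy0]
  · linarith [hcap x hx hx0, hSm y hy hy0]
  · linarith [hcap x hx hx0, hcap y hy hy0]

lemma continuousAt_normalize {x : V} (hx : x ≠ 0) : ContinuousAt NormedSpace.normalize x :=
  ((continuous_norm.continuousAt).inv₀ (norm_ne_zero_iff.2 hx)).smul continuousAt_id

def sCone (C : Set V) : Set V := {v | ∃ r : ℝ, 0 ≤ r ∧ ∃ x ∈ C, v = r • x}

lemma subset_sCone (C : Set V) : C ⊆ sCone C :=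
  fun x hx => ⟨1, zero_le_one, x, hx, (one_smul ℝ x).symm⟩

lemma innerDual_sCone [CompleteSpace V] (C : Set V) : innerDual (sCone C) = innerDual C := by
  refine le_antisymm (innerDual_le_innerDual (subset_sCone C)) fun y hy => ?_
  rintro _ ⟨r, hr, x, hx, rfl⟩
  show 0 ≤ ⟪r • x, y⟫
  rw [real_inner_smul_left]
  exact mul_nonneg hr (hy hx)

lemma sCone_inter_properCone {C : Set V} (K : ProperCone ℝ V) (h : (C ∩ K).Nonempty) :
    sCone (C ∩ K) = sCone C ∩ K := by
  ext v
  constructor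
  · rintro ⟨r, hr, x, ⟨hxC, hxK⟩, rfl⟩
    exact ⟨⟨r, hr, x, hxC, rfl⟩, K.smul_mem hxK hr⟩
  · rintro ⟨⟨r, hr, x, hx, rfl⟩, hK⟩
    rcases hr.eq_or_lt with rfl | hr
    · obtain ⟨z, hz⟩ := h
      exact ⟨0, le_rfl, z, hz, by simp⟩
    · refine ⟨r, hr.le, x, ⟨hx, ?_⟩, rfl⟩
      simpa [smul_smul, inv_mul_cancel₀ hr.ne'] using K.smul_mem hK (inv_nonneg.2 hr.le)

end InnerProductSpace

lemma mem_Sph_iff {x : E d} : x ∈ Sph d ↔ ‖x‖ = 1 := mem_sphere_zero_iff_norm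

lemma normalize_mem_Sph {x : E d} (hx : x ≠ 0) : NormedSpace.normalize x ∈ Sph d :=
  mem_Sph_iff.2 (norm_normalize_eq_one_iff.2 hx)

lemma ne_zero_of_mem_Sph {x : E d} (hx : x ∈ Sph d) : x ≠ 0 := by
  rintro rfl; simp [mem_Sph_iff] at hx

lemma sdist_eq_angle {x y : E d} (hx : x ∈ Sph d) (hy : y ∈ Sph d) : sdist x y = angle x y := by
  simp [sdist, InnerProductGeometry.angle, mem_Sph_iff.1 hx, mem_Sph_iff.1 hy]

lemma subset_Hemi_iff {C : Set (E d)} (hC : C ⊆ Sph d) {k : E d} :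
    C ⊆ Hemi k ↔ k ∈ innerDual C :=
  ⟨fun h x hx => show 0 ≤ ⟪x, k⟫ by rw [real_inner_comm]; exact (h hx).2,
    fun h x hx => ⟨hC hx, by rw [real_inner_comm]; exact h hx⟩⟩

lemma sInterior_subset (C : Set (E d)) : sInterior C ⊆ C :=
  fun _ ⟨hx, _, hε, hball⟩ => hball ⟨mem_ball_self hε, hx⟩

lemma mem_sInterior_inter {C P : Set (E d)} {x : E d} (hx : x ∈ sInterior C) (hP : P ∈ 𝓝 x) :
    x ∈ sInterior (C ∩ P) := by
  obtain ⟨hxS, ε, hε, hball⟩ := hx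
  obtain ⟨ε', hε', hP⟩ := Metric.mem_nhds_iff.1 hP
  exact ⟨hxS, min ε ε', lt_min hε hε', fun y hy =>
    ⟨hball ⟨ball_subset_ball (min_le_left _ _) hy.1, hy.2⟩,
      hP (ball_subset_ball (min_le_right _ _) hy.1)⟩⟩

lemma mem_of_mem_sCone {C : Set (E d)} (hC : C ⊆ Sph d) {v : E d} (hv : v ∈ sCone C)
    (hvS : v ∈ Sph d) : v ∈ C := by
  obtain ⟨r, hr, x, hx, rfl⟩ := hv
  have : r = 1 := by
    simpa [mem_Sph_iff, norm_smul, abs_of_nonneg hr, mem_Sph_iff.1 (hC hx)] using hvS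
  simpa [this] using hx

lemma isClosed_sCone {C : Set (E d)} (hC : C ⊆ Sph d) (hcl : IsClosed C) (hne : C.Nonempty) :
    IsClosed (sCone C) := by
  refine closure_subset_iff_isClosed.1 fun v hv => ?_
  rcases eq_or_ne v 0 with rfl | hv0
  · obtain ⟨x, hx⟩ := hne
    exact ⟨0, le_rfl, x, hx, (zero_smul ℝ x).symm⟩
  have himage : NormedSpace.normalize '' sCone C ⊆ insert 0 C := by
    rintro _ ⟨_, ⟨r, hr, x, hx, rfl⟩, rfl⟩
    rcases hr.eq_or_lt with rfl | hr
    · simp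
    · rw [normalize_smul_of_pos hr, normalize_eq_self_of_norm_eq_one (mem_Sph_iff.1 (hC hx))]
      exact .inr hx
  have hnv : NormedSpace.normalize v ∈ insert 0 C :=
    closure_minimal himage (by rw [insert_eq]; exact isClosed_singleton.union hcl)
    ((continuousAt_normalize hv0).continuousWithinAt.mem_closure_image hv)
  refine ⟨‖v‖, norm_nonneg v, _, hnv.resolve_left ?_, (norm_smul_normalize v).symm⟩
  rwa [normalize_eq_zero_iff]

lemma mem_sInterior_iff {C : Set (E d)} (hC : C ⊆ Sph d) {x : E d} (hx : x ∈ Sph d) :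
    x ∈ sInterior C ↔ x ∈ interior (sCone C) := by
  constructor
  · rintro ⟨-, ε, hε, hball⟩
    have hx0 := ne_zero_of_mem_Sph hx
    have hnhds : NormedSpace.normalize ⁻¹' ball x ε ∩ {v | v ≠ 0} ∈ 𝓝 x := by
      refine inter_mem ((continuousAt_normalize hx0).preimage_mem_nhds ?_) (isOpen_ne.mem_nhds hx0)
      rw [normalize_eq_self_of_norm_eq_one (mem_Sph_iff.1 hx)]
      exact ball_mem_nhds x hε
    refine mem_interior_iff_mem_nhds.2 (mem_of_superset hnhds fun v ⟨hvb, hv0⟩ => ?_)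
    exact ⟨‖v‖, norm_nonneg v, _, hball ⟨hvb, normalize_mem_Sph hv0⟩, (norm_smul_normalize v).symm⟩
  · intro h
    obtain ⟨ε, hε, hball⟩ := Metric.mem_nhds_iff.1 (mem_interior_iff_mem_nhds.1 h)
    exact ⟨hx, ε, hε, fun y hy => mem_of_mem_sCone hC (hball hy.1) hy.2⟩

lemma IsBody.exists_properCone_coe_eq_sCone {C : Set (E d)} (hC : IsBody C) :
    ∃ K : ProperCone ℝ (E d), (K : Set (E d)) = sCone C := by
  obtain ⟨hCS, hcl, ⟨-, hconv⟩, x, hx⟩ := hC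
  have hne : C.Nonempty := ⟨x, sInterior_subset C hx⟩
  have hsmul : ∀ v ∈ sCone C, ∀ r : ℝ, 0 ≤ r → r • v ∈ sCone C := by
    rintro _ ⟨s, hs, y, hy, rfl⟩ r hr
    exact ⟨r * s, mul_nonneg hr hs, y, hy, smul_smul r s y⟩
  refine ProperCone.exists_coe_eq ⟨0, le_rfl, x, sInterior_subset C hx, (zero_smul ℝ _).symm⟩
    (fun v hv w hw => ?_) hsmul (isClosed_sCone hCS hcl hne)
  have hmid := hconv hv hw (by norm_num : (0 : ℝ) ≤ 1 / 2) (by norm_num : (0 : ℝ) ≤ 1 / 2)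
    (by norm_num)
  convert hsmul _ hmid 2 (by norm_num) using 1
  rw [← smul_add, smul_smul]; norm_num

lemma IsBody.inner_pos {C : Set (E d)} (hC : IsBody C) {x a : E d} (hx : x ∈ sInterior C)
    (ha : a ∈ innerDual C) (ha0 : a ≠ 0) : 0 < ⟪x, a⟫ :=
  inner_pos_of_mem_interior (innerDual_sCone C ▸ ha) ha0 ((mem_sInterior_iff hC.1 hx.1).1 hx)

lemma IsBody.exists_supporting {C : Set (E d)} (hC : IsBody C) {p : E d} (hp : p ∈ C)
    (hpi : p ∉ sInterior C) : ∃ k : E d, k ∈ Sph d ∧ C ⊆ Hemi k ∧ p ∈ bdHemi k := by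
  obtain ⟨x₀, hx₀⟩ := hC.2.2.2
  have hpK : p ∉ interior (sCone C) := fun h => hpi ((mem_sInterior_iff hC.1 (hC.1 hp)).2 h)
  obtain ⟨f, hf0, hf⟩ := geometric_hahn_banach_of_nonempty_interior_point hC.2.2.1.2 hpK
    ⟨x₀, (mem_sInterior_iff hC.1 hx₀.1).1 hx₀⟩
  have hfp : f p = 0 := by
    have h0 := hf 0 ⟨0, le_rfl, p, hp, (zero_smul ℝ p).symm⟩
    have h2 := hf ((2 : ℝ) • p) ⟨2, zero_le_two, p, hp, rfl⟩
    simp only [map_zero, map_smul, smul_eq_mul] at h0 h2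
    linarith
  set w := (InnerProductSpace.toDual ℝ (E d)).symm f
  have hw0 : w ≠ 0 := by simpa [w] using hf0
  have hk : ∀ v, ⟪NormedSpace.normalize (-w), v⟫ = -(‖w‖⁻¹ * f v) := fun v => by
    rw [NormedSpace.normalize, real_inner_smul_left, inner_neg_left, norm_neg,
      InnerProductSpace.toDual_symm_apply]
    ring
  refine ⟨NormedSpace.normalize (-w), normalize_mem_Sph (neg_ne_zero.2 hw0),
    fun x hx => ⟨hC.1 hx, ?_⟩, hC.1 hp, by rw [hk, hfp, mul_zero, neg_zero]⟩
  rw [hk, neg_nonneg]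
  exact mul_nonpos_of_nonneg_of_nonpos (inv_nonneg.2 (norm_nonneg w))
    (hfp ▸ hf x (subset_sCone C hx))

def lthickSet (C : Set (E d)) : Set ℝ :=
  {w | ∃ g ∈ Sph d, ∃ h ∈ Sph d, g ≠ h ∧ g ≠ -h ∧ C ⊆ Hemi g ∩ Hemi h ∧ w = lthick g h}

lemma thick_eq_sInf (C : Set (E d)) : thick C = sInf (lthickSet C) := rfl

lemma lthickSet_mono {Z C : Set (E d)} (h : Z ⊆ C) : lthickSet C ⊆ lthickSet Z :=
  fun _ ⟨g, hg, k, hk, hgk, hgk', hC, hw⟩ => ⟨g, hg, k, hk, hgk, hgk', h.trans hC, hw⟩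

lemma lthick_mem_Icc (g h : E d) : lthick g h ∈ Icc 0 π := by
  unfold lthick sdist
  constructor <;> linarith [arccos_le_pi ⟪g, h⟫, arccos_nonneg ⟪g, h⟫]

lemma bddBelow_lthickSet (C : Set (E d)) : BddBelow (lthickSet C) :=
  ⟨0, fun _ ⟨g, _, h, _, _, _, _, hw⟩ => hw ▸ (lthick_mem_Icc g h).1⟩

lemma thick_le_pi (C : Set (E d)) : thick C ≤ π := by
  rcases (lthickSet C).eq_empty_or_nonempty with h | ⟨w, hw⟩
  · rw [thick_eq_sInf, h, Real.sInf_empty]; exact pi_pos.le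
  · refine (csInf_le (bddBelow_lthickSet C) hw).trans ?_
    obtain ⟨g, _, h, _, _, _, _, rfl⟩ := hw
    exact (lthick_mem_Icc g h).2

lemma angle_le_pi_sub_thick {C : Set (E d)} (hC : IsBody C) {a a' : E d} (ha : a ∈ innerDual C)
    (ha' : a' ∈ innerDual C) (ha0 : a ≠ 0) (ha0' : a' ≠ 0) : angle a a' ≤ π - thick C := by
  rw [← angle_normalize_left, ← angle_normalize_right]
  set u := NormedSpace.normalize a
  set v := NormedSpace.normalize a'
  have hu : u ∈ Sph d := normalize_mem_Sph ha0
  have hv : v ∈ Sph d := normalize_mem_Sph ha0'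
  have hCu : u ∈ innerDual C := (innerDual C).normalize_mem ha
  have hCv : v ∈ innerDual C := (innerDual C).normalize_mem ha'
  rcases eq_or_ne u v with huv | huv
  · rw [huv, angle_self (ne_zero_of_mem_Sph hv)]
    linarith [thick_le_pi C]
  have huv' : u ≠ -v := by
    rintro huv'
    obtain ⟨x₀, hx₀⟩ := hC.2.2.2
    have h₁ := hC.inner_pos hx₀ hCu (ne_zero_of_mem_Sph hu)
    have h₂ := hC.inner_pos hx₀ hCv (ne_zero_of_mem_Sph hv)
    rw [huv', inner_neg_right] at h₁
    linarith
  have := csInf_le (bddBelow_lthickSet C) ⟨u, hu, v, hv, huv, huv',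
    subset_inter ((subset_Hemi_iff hC.1).2 hCu) ((subset_Hemi_iff hC.1).2 hCv), rfl⟩
  rw [← thick_eq_sInf, lthick, sdist_eq_angle hu hv] at this
  linarith

lemma exists_lt_angle_of_thick_lt {Z C : Set (E d)} (hZC : Z ⊆ C) (hC : 0 < thick C)
    (h : thick Z < thick C) :
    ∃ u ∈ Sph d, ∃ v ∈ Sph d, Z ⊆ Hemi u ∧ Z ⊆ Hemi v ∧ π - thick C < angle u v := by
  have hne : (lthickSet Z).Nonempty := by
    refine ((lthickSet C).eq_empty_or_nonempty.resolve_left fun h0 => ?_).mono (lthickSet_mono hZC)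
    rw [thick_eq_sInf, h0, Real.sInf_empty] at hC
    exact hC.false
  obtain ⟨_, ⟨u, hu, v, hv, -, -, hZuv, rfl⟩, hlt⟩ := exists_lt_of_csInf_lt hne h
  refine ⟨u, hu, v, hv, (subset_inter_iff.1 hZuv).1, (subset_inter_iff.1 hZuv).2, ?_⟩
  rw [lthick, sdist_eq_angle hu hv] at hlt
  linarith

lemma isBody_inter_innerDual_capCone {R : Set (E d)} (hR : IsBody R) {x₀ m : E d}
    (hx₀ : x₀ ∈ sInterior R) (hm : m ≠ 0) {η : ℝ} (hη : 0 ≤ η) (hx₀m : angle m x₀ < π / 2 - η) :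
    IsBody (R ∩ innerDual (capCone m η)) := by
  set P := innerDual (capCone m η)
  have hP : (P : Set (E d)) ∈ 𝓝 x₀ := by
    have hcont : ContinuousAt (angle m ·) x₀ :=
      (continuousAt_angle (x := (m, x₀)) hm (ne_zero_of_mem_Sph hx₀.1)).comp
        (f := fun y => (m, y)) (by fun_prop)
    exact mem_of_superset (hcont.eventually_lt continuousAt_const hx₀m)
      fun y hy => mem_innerDual_capCone hm hη hy.le
  have hx₀Z : x₀ ∈ R ∩ P := ⟨sInterior_subset R hx₀, mem_of_mem_nhds hP⟩
  obtain ⟨hRS, hcl, ⟨hanti, hconv⟩, -⟩ := hR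
  refine ⟨inter_subset_left.trans hRS, hcl.inter P.isClosed,
    ⟨fun x hx hx' => hanti x hx.1 hx'.1, ?_⟩, x₀, mem_sInterior_inter hx₀ hP⟩
  show Convex ℝ (sCone (R ∩ P))
  rw [sCone_inter_properCone P ⟨x₀, hx₀Z⟩]
  exact hconv.inter P.convex

lemma mem_closure_innerDual_add_capCone {R : Set (E d)} (hR : IsBody R) {m : E d} {η : ℝ}
    (hη : 0 ≤ cos η) (hne : (R ∩ innerDual (capCone m η)).Nonempty) {w : E d}
    (hw : R ∩ innerDual (capCone m η) ⊆ Hemi w) :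
    w ∈ closure ((innerDual R : Set (E d)) + capCone m η) := by
  obtain ⟨K, hK⟩ := hR.exists_properCone_coe_eq_sCone
  obtain ⟨D, hD⟩ := exists_properCone_coe_eq_capCone m hη
  rw [subset_Hemi_iff (inter_subset_left.trans hR.1), ← innerDual_sCone,
    sCone_inter_properCone _ hne, ← hK, ← hD] at hw
  have := ProperCone.innerDual_inter_subset_closure_add K (innerDual (D : Set (E d))) hw
  rwa [innerDual_innerDual, hK, innerDual_sCone, hD] at this

lemma Reduced.exists_lt_angle {R : Set (E d)} (hR : Reduced R) (hth : π / 2 < thick R)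
    {p m : E d} (hp : p ∈ R) (hm : m ∈ innerDual R) (hm0 : m ≠ 0) (hmp : ⟪m, p⟫ = 0) {θ : ℝ}
    (hθ : θ < π - thick R) : ∃ a ∈ innerDual R, a ≠ 0 ∧ θ < angle a m := by
  by_contra! hθm
  obtain ⟨hbody, hmin⟩ := hR
  obtain ⟨x₀, hx₀⟩ := hbody.2.2.2
  set δ := π - thick R
  have hθ0 : 0 ≤ θ := (angle_nonneg m m).trans (hθm m hm hm0)
  have hmx₀ : angle m x₀ < π / 2 := by
    rw [angle, arccos_lt_pi_div_two, real_inner_comm]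
    exact div_pos (hbody.inner_pos hx₀ hm hm0)
      (mul_pos (norm_pos_iff.2 hm0) (norm_pos_iff.2 (ne_zero_of_mem_Sph hx₀.1)))
  -- `θ + η ≤ δ` and `2 * η ≤ δ` keep the thin cone within `δ` of every centre, and
  -- `angle m x₀ + η < π / 2` keeps `x₀` interior to the cut.
  set η := min (δ - θ) (π / 2 - angle m x₀) / 2
  have hη : 0 < η := div_pos (lt_min (by linarith) (by linarith)) two_pos
  have hηδ : η ≤ (δ - θ) / 2 := div_le_div_of_nonneg_right (min_le_left _ _) two_pos.le
  have hηx : η ≤ (π / 2 - angle m x₀) / 2 :=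
    div_le_div_of_nonneg_right (min_le_right _ _) two_pos.le
  set Z := R ∩ innerDual (capCone m η)
  have hZ : IsBody Z := isBody_inter_innerDual_capCone hbody hx₀ hm0 hη.le (by linarith)
  have hZR : Z ≠ R := fun h => notMem_innerDual_capCone hm0 (mem_Sph_iff.1 (hbody.1 hp)) hmp
    (sin_pos_of_pos_of_lt_pi hη (by linarith)) (h.symm ▸ hp : p ∈ Z).2
  obtain ⟨u, hu, v, hv, hZu, hZv, huv⟩ :=
    exists_lt_angle_of_thick_lt inter_subset_left (by linarith) (hmin Z hZ inter_subset_left hZR)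
  have hpair := pairwiseInnerGE_closure_add_capCone hm0 hη.le (by linarith) (by linarith)
    (fun a ha a' ha' => angle_le_pi_sub_thick hbody ha ha')
    (fun a ha ha0 => (hθm a ha ha0).trans (by linarith))
  have hcos : 0 ≤ cos η := cos_nonneg_of_mem_Icc ⟨by linarith [pi_pos], by linarith⟩
  have hZne : Z.Nonempty := ⟨_, sInterior_subset Z hZ.2.2.2.some_mem⟩
  have := angle_le_of_cos_mul_norm_mul_norm_le_inner (ne_zero_of_mem_Sph hu)
    (ne_zero_of_mem_Sph hv) (by linarith [thick_le_pi R])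
    (hpair u (mem_closure_innerDual_add_capCone hbody hcos hZne hZu)
      v (mem_closure_innerDual_add_capCone hbody hcos hZne hZv))
  linarith

lemma Reduced.eq_of_mem_bdHemi {R : Set (E d)} (hR : Reduced R) (hth : π / 2 < thick R)
    {p k₁ k₂ : E d} (hp : p ∈ R) (hk₁ : k₁ ∈ Sph d) (hRk₁ : R ⊆ Hemi k₁) (hpk₁ : p ∈ bdHemi k₁)
    (hk₂ : k₂ ∈ Sph d) (hRk₂ : R ⊆ Hemi k₂) (hpk₂ : p ∈ bdHemi k₂) : k₁ = k₂ := by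
  by_contra hne
  have hbody := hR.1
  obtain ⟨x₀, hx₀⟩ := hbody.2.2.2
  rw [subset_Hemi_iff hbody.1] at hRk₁ hRk₂
  have hx₀m : 0 < ⟪x₀, k₁ + k₂⟫ := by
    rw [inner_add_right]
    exact add_pos (hbody.inner_pos hx₀ hRk₁ (ne_zero_of_mem_Sph hk₁))
      (hbody.inner_pos hx₀ hRk₂ (ne_zero_of_mem_Sph hk₂))
  have hm0 : k₁ + k₂ ≠ 0 := fun h => by simp [h] at hx₀m
  have hmp : ⟪k₁ + k₂, p⟫ = 0 := by rw [inner_add_left, hpk₁.2, hpk₂.2, add_zero]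
  have hlt : ∀ a ∈ innerDual R, a ≠ 0 → angle a (k₁ + k₂) < π - thick R := fun a ha ha0 =>
    angle_add_lt ha0 (mem_Sph_iff.1 hk₁) (mem_Sph_iff.1 hk₂) hne (by linarith)
      (angle_le_pi_sub_thick hbody ha hRk₁ ha0 (ne_zero_of_mem_Sph hk₁))
      (angle_le_pi_sub_thick hbody ha hRk₂ ha0 (ne_zero_of_mem_Sph hk₂))
  obtain ⟨θ, hθδ, hθ⟩ := (innerDual R).exists_forall_angle_le_of_forall_angle_lt hm0 hlt
  obtain ⟨a, ha, ha0, hθa⟩ := hR.exists_lt_angle hth hp (add_mem hRk₁ hRk₂) hm0 hmp hθδ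
  exact (hθ a ha ha0).not_gt hθa

/-- every reduced spherical body of thickness greater than `π/2`
is smooth: each boundary point has exactly one supporting hemisphere. -/
theorem stmt11 {d : ℕ} (R : Set (E d)) (hR : Reduced R)
    (hth : Real.pi / 2 < thick R) :
    ∀ p ∈ R \ sInterior R, ∃! k : E d, k ∈ Sph d ∧ R ⊆ Hemi k ∧ p ∈ bdHemi k := by
  rintro p ⟨hp, hpi⟩
  obtain ⟨k, hk, hRk, hpk⟩ := hR.1.exists_supporting hp hpi
  exact ⟨k, ⟨hk, hRk, hpk⟩, fun k' ⟨hk', hRk', hpk'⟩ =>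
    hR.eq_of_mem_bdHemi hth hp hk' hRk' hpk' hk hRk hpk⟩
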